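/- For any C¹ function v on ℝ^{m+k} \ {z = 0}, the intrinsic gradients of v and of the gauge ρ satisfy ⟨Xv, Xρ⟩ = Σ_{i=1}^{m+k} X_i v · X_i ρ = (Zv/ρ) ψ, where Z = Σ_i z_i ∂_{z_i} + (α+1) Σ_j t_j ∂_{t_j} and ψ = |z|^{2α}/ρ^{2α}. -/

import Mathlib

open MeasureTheory Real

noncomputable section

variable {m k : ℕ}

abbrev Pt (m k : ℕ) := EuclideanSpace ℝ (Fin m) × EuclideanSpace ℝ (Fin k)

/-- standard basis direction in the `z` variables -/
def ez (i : Fin m) : Pt m k := (EuclideanSpace.single i (1:ℝ), 0)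

/-- standard basis direction in the `t` variables -/
def et (j : Fin k) : Pt m k := (0, EuclideanSpace.single j (1:ℝ))

/-- second partial derivative in direction `v` -/
def pd2 (u : Pt m k → ℝ) (p v : Pt m k) : ℝ :=
  fderiv ℝ (fun q => fderiv ℝ u q v) p v

/-- Laplacian in the `z` variables -/
def lapz (u : Pt m k → ℝ) (p : Pt m k) : ℝ := ∑ i : Fin m, pd2 u p (ez i)

/-- Laplacian in the `t` variables -/
def lapt (u : Pt m k → ℝ) (p : Pt m k) : ℝ := ∑ j : Fin k, pd2 u p (et j)

/-- the Baouendi operator `B_α u = Δ_z u + |z|^{2α} Δ_t u` -/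
def Bop (α : ℝ) (u : Pt m k → ℝ) (p : Pt m k) : ℝ :=
  lapz u p + ‖p.1‖ ^ (2*α) * lapt u p

/-- the generator `Z = Σ z_i ∂_{z_i} + (α+1) Σ t_j ∂_{t_j}` -/
def Zop (α : ℝ) (u : Pt m k → ℝ) (p : Pt m k) : ℝ :=
  fderiv ℝ u p (p.1, (α+1) • p.2)

/-- the intrinsic gauge `ρ` -/
def rho (α : ℝ) (p : Pt m k) : ℝ :=
  (‖p.1‖ ^ (2*(α+1)) + (α+1)^2 * ‖p.2‖^2) ^ (1/(2*(α+1)))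

/-- the angle function `ψ = |z|^{2α}/ρ^{2α}` -/
def psi (α : ℝ) (p : Pt m k) : ℝ := ‖p.1‖ ^ (2*α) / rho α p ^ (2*α)

/-- `|∇_z u|²` -/
def gradzSq (u : Pt m k → ℝ) (p : Pt m k) : ℝ :=
  ∑ i : Fin m, (fderiv ℝ u p (ez i))^2

/-- `|∇_t u|²` -/
def gradtSq (u : Pt m k → ℝ) (p : Pt m k) : ℝ :=
  ∑ j : Fin k, (fderiv ℝ u p (et j))^2

/-- `|Xu|² = |∇_z u|² + |z|^{2α}|∇_t u|²` -/
def XgradSq (α : ℝ) (u : Pt m k → ℝ) (p : Pt m k) : ℝ :=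
  gradzSq u p + ‖p.1‖ ^ (2*α) * gradtSq u p

/-- anisotropic dilation `δ_λ(z,t) = (λz, λ^{α+1}t)` -/
def dil (α l : ℝ) (p : Pt m k) : Pt m k := (l • p.1, (l ^ (α+1)) • p.2)

/-- gauge ball `B_r` -/
def gball (α r : ℝ) : Set (Pt m k) := {p | rho α p < r}

/-
Away from `z = 0` the function `ρ ^ (2(α+1)) = |z| ^ (2(α+1)) + (α+1)² |t|²` is differentiable
and positive, so the chain rule gives `∇_z ρ = ρ ^ (-(2α+1)) |z| ^ (2α) z` and
`∇_t ρ = ρ ^ (-(2α+1)) (α+1) t`. The weight `|z| ^ (2α)` on the `t`-part of the pairing then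
matches the one on the `z`-part, and what remains is `ρ ^ (-(2α+1)) |z| ^ (2α) dv (z, (α+1) t)`,
i.e. `(Zv / ρ) ψ`.
-/
theorem hasFDerivAt_norm_rpow_of_ne_zero {E : Type*} [NormedAddCommGroup E]
    [InnerProductSpace ℝ E] {x : E} (hx : x ≠ 0) (a : ℝ) :
    HasFDerivAt (fun y : E ↦ ‖y‖ ^ a) ((a * ‖x‖ ^ (a - 2)) • innerSL ℝ x) x := by
  have hpow : (fun y : E ↦ ‖y‖ ^ a) = fun y ↦ (‖y‖ ^ 2) ^ (a / 2) := by
    funext y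
    rw [← rpow_natCast, ← rpow_mul (norm_nonneg y)]
    ring_nf
  rw [hpow]
  refine ((hasStrictFDerivAt_norm_sq x).rpow_const (by simp [hx])).hasFDerivAt.congr_fderiv ?_
  rw [← Nat.cast_smul_eq_nsmul ℝ, smul_smul, ← rpow_natCast, ← rpow_mul (norm_nonneg x)]
  push_cast
  ring_nf

theorem EuclideanSpace.sum_smul_single_one {n : ℕ} (x : EuclideanSpace ℝ (Fin n)) :
    ∑ i, x i • EuclideanSpace.single i (1 : ℝ) = x := by
  simpa [EuclideanSpace.basisFun_apply] using (EuclideanSpace.basisFun (Fin n) ℝ).sum_repr x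

theorem sum_smul_ez_add_sum_smul_et (w : Pt m k) :
    ∑ i, w.1 i • (ez i : Pt m k) + ∑ j, w.2 j • (et j : Pt m k) = w := by
  ext1
  · simp [ez, et, Prod.fst_sum, EuclideanSpace.sum_smul_single_one]
  · simp [ez, et, Prod.snd_sum, EuclideanSpace.sum_smul_single_one]

theorem apply_eq_sum_ez_add_sum_et (f : Pt m k →L[ℝ] ℝ) (w : Pt m k) :
    f w = ∑ i, w.1 i * f (ez i) + ∑ j, w.2 j * f (et j) := by
  conv_lhs => rw [← sum_smul_ez_add_sum_smul_et w]
  simp [map_sum]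

def rhoBase (α : ℝ) (p : Pt m k) : ℝ := ‖p.1‖ ^ (2*(α+1)) + (α+1)^2 * ‖p.2‖^2

theorem rho_eq_rhoBase_rpow (α : ℝ) (p : Pt m k) :
    rho α p = rhoBase α p ^ (1/(2*(α+1))) := rfl

theorem rhoBase_pos (α : ℝ) {p : Pt m k} (hz : p.1 ≠ 0) : 0 < rhoBase α p := by
  have := rpow_pos_of_pos (norm_pos_iff.2 hz) (2*(α+1))
  unfold rhoBase
  positivity

theorem rho_pos (α : ℝ) {p : Pt m k} (hz : p.1 ≠ 0) : 0 < rho α p :=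
  rpow_pos_of_pos (rhoBase_pos α hz) _

theorem hasFDerivAt_rhoBase (α : ℝ) {p : Pt m k} (hz : p.1 ≠ 0) :
    HasFDerivAt (rhoBase α) ((2*(α+1)) •
      (‖p.1‖ ^ (2*α) • (innerSL ℝ p.1).comp (ContinuousLinearMap.fst ℝ _ _) +
        (α+1) • (innerSL ℝ p.2).comp (ContinuousLinearMap.snd ℝ _ _))) p := by
  have hz' := (hasFDerivAt_norm_rpow_of_ne_zero hz (2*(α+1))).comp p hasFDerivAt_fst
  have ht := (hasFDerivAt_snd (p := p)).norm_sq.const_mul ((α+1)^2)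
  refine (hz'.add ht).congr_fderiv ?_
  ext w <;>
    simp only [ContinuousLinearMap.smul_comp, ContinuousLinearMap.add_comp, add_apply, smul_apply,
      ContinuousLinearMap.comp_apply, ContinuousLinearMap.inl_apply, ContinuousLinearMap.inr_apply,
      ContinuousLinearMap.coe_fst', ContinuousLinearMap.coe_snd', coe_innerSL_apply,
      inner_zero_right, smul_eq_mul, nsmul_eq_mul, Nat.cast_ofNat, mul_zero,
      add_zero, zero_add, smul_add] <;>
    ring_nf

theorem hasFDerivAt_rho {α : ℝ} (hα : α + 1 ≠ 0) {p : Pt m k} (hz : p.1 ≠ 0) :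
    HasFDerivAt (rho α) (rho α p ^ (-(2*α+1)) •
      (‖p.1‖ ^ (2*α) • (innerSL ℝ p.1).comp (ContinuousLinearMap.fst ℝ _ _) +
        (α+1) • (innerSL ℝ p.2).comp (ContinuousLinearMap.snd ℝ _ _))) p := by
  have hN := rhoBase_pos α hz
  refine ((hasFDerivAt_rhoBase α hz).rpow_const (p := 1/(2*(α+1))) (Or.inl hN.ne')).congr_fderiv ?_
  have hexp : 1 / (2*(α+1)) * -(2*α+1) = 1 / (2*(α+1)) - 1 := by
    field_simp
    ring
  rw [smul_smul, rho_eq_rhoBase_rpow, ← rpow_mul hN.le, hexp]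
  field_simp

theorem intrinsic_gradient_pairing_general (m k : ℕ) (α : ℝ) (hα : 0 < α)
    (v : Pt m k → ℝ) (p : Pt m k) (hz : p.1 ≠ 0) :
    (∑ i : Fin m, fderiv ℝ v p (ez i) * fderiv ℝ (rho α) p (ez i))
      + ‖p.1‖ ^ (2*α) *
        (∑ j : Fin k, fderiv ℝ v p (et j) * fderiv ℝ (rho α) p (et j))
      = (Zop α v p / rho α p) * psi α p := by
  have hρ := rho_pos α hz
  have hdρ := (hasFDerivAt_rho (by positivity : α + 1 ≠ 0) hz).fderiv
  set c := rho α p ^ (-(2*α+1)) with hc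
  have hez : ∀ i, fderiv ℝ (rho α) p (ez i) = c * ‖p.1‖ ^ (2*α) * p.1 i := by
    intro i
    simp [hdρ, ez, EuclideanSpace.inner_single_right, mul_assoc]
  have het : ∀ j, fderiv ℝ (rho α) p (et j) = c * (α+1) * p.2 j := by
    intro j
    simp [hdρ, et, EuclideanSpace.inner_single_right, mul_assoc]
  calc _ = c * ‖p.1‖ ^ (2*α) * Zop α v p := by
        rw [Zop, apply_eq_sum_ez_add_sum_et]
        simp only [hez, het, mul_add, Finset.mul_sum]
        congr 1 <;> refine Finset.sum_congr rfl fun _ _ => ?_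
        · ring
        · simp only [PiLp.smul_apply, smul_eq_mul]
          ring
    _ = _ := by
        rw [psi, hc, rpow_neg hρ.le, rpow_add_one hρ.ne']
        field_simp

theorem intrinsic_gradient_pairing (m k : ℕ) (α : ℝ) (hα : 0 < α)
    (v : Pt m k → ℝ) (hv : ∀ p : Pt m k, p.1 ≠ 0 → DifferentiableAt ℝ v p)
    (p : Pt m k) (hz : p.1 ≠ 0) :
    (∑ i : Fin m, fderiv ℝ v p (ez i) * fderiv ℝ (rho α) p (ez i))
      + ‖p.1‖ ^ (2*α) *
        (∑ j : Fin k, fderiv ℝ v p (et j) * fderiv ℝ (rho α) p (et j))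
      = (Zop α v p / rho α p) * psi α p :=
  intrinsic_gradient_pairing_general m k α hα v p hz
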